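/- Let g, r, b be natural numbers with 0 < b ≤ r + g. Define f(ℓ) = C(r,ℓ)·C(g,b-ℓ)·(ℓ/b)/C(r+g,b) for 1 ≤ ℓ ≤ min(r,b) (the probability that in sampling b balls without replacement from r red and g green balls, the b-th ball is red and exactly ℓ sampled balls are red). Then f is unimodal in ℓ: there is a mode ℓ* such that f is nondecreasing for ℓ ≤ ℓ* and nonincreasing for ℓ ≥ ℓ*. -/
import Mathlib

/-- Auxiliary natural-number sequence proportional to `f`. -/
def aseq (g r b ℓ : ℕ) : ℕ := ℓ * r.choose ℓ * g.choose (b - ℓ)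

lemma aseq_pos {g r b ℓ : ℕ} (h1 : 1 ≤ ℓ) (h2 : ℓ ≤ r) (h3 : b - ℓ ≤ g) :
    0 < aseq g r b ℓ :=
  Nat.mul_pos (Nat.mul_pos h1 (Nat.choose_pos h2)) (Nat.choose_pos h3)

lemma aseq_green {g r b ℓ : ℕ} (h : 0 < aseq g r b ℓ) : b - ℓ ≤ g := by
  by_contra hc
  push_neg at hc
  unfold aseq at h
  rw [Nat.choose_eq_zero_of_lt hc] at h
  simp at h

/-- Key ratio identity in natural numbers. -/
lemma aseq_key (g r b ℓ : ℕ) (hℓ : ℓ + 1 ≤ b) :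
    aseq g r b (ℓ + 1) * (ℓ * (g + ℓ + 1 - b)) =
      aseq g r b ℓ * ((r - ℓ) * (b - ℓ)) := by
  set m := b - (ℓ + 1) with hm
  have hbℓ : b - ℓ = m + 1 := by omega
  have hgm : g - m = g + ℓ + 1 - b := by omega
  have h1 : r.choose (ℓ + 1) * (ℓ + 1) = r.choose ℓ * (r - ℓ) :=
    Nat.choose_succ_right_eq r ℓ
  have h2 : g.choose (m + 1) * (m + 1) = g.choose m * (g - m) :=
    Nat.choose_succ_right_eq g m
  unfold aseq
  rw [hbℓ, ← hgm]
  calc (ℓ + 1) * r.choose (ℓ + 1) * g.choose m * (ℓ * (g - m))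
      = (r.choose (ℓ + 1) * (ℓ + 1)) * (g.choose m * (g - m)) * ℓ := by ring
    _ = (r.choose ℓ * (r - ℓ)) * (g.choose (m + 1) * (m + 1)) * ℓ := by rw [h1, ← h2]
    _ = ℓ * r.choose ℓ * g.choose (m + 1) * ((r - ℓ) * (m + 1)) := by ring

/-- Strict-decrease propagation: once the sequence strictly decreases, it keeps decreasing. -/
lemma aseq_prop (g r b ℓ : ℕ) (h1 : 1 ≤ ℓ) (h2 : ℓ + 2 ≤ min r b)
    (hlt : aseq g r b (ℓ + 1) < aseq g r b ℓ) :
    aseq g r b (ℓ + 2) < aseq g r b (ℓ + 1) := by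
  have hr : ℓ + 2 ≤ r := le_trans h2 (min_le_left _ _)
  have hbb : ℓ + 2 ≤ b := le_trans h2 (min_le_right _ _)
  have hposℓ : 0 < aseq g r b ℓ := lt_of_le_of_lt (Nat.zero_le _) hlt
  have hg : b - ℓ ≤ g := aseq_green hposℓ
  have hpos1 : 0 < aseq g r b (ℓ + 1) := aseq_pos (by omega) (by omega) (by omega)
  have key1 := aseq_key g r b ℓ (by omega)
  have key2 := aseq_key g r b (ℓ + 1) (by omega)
  -- from key1 and hlt deduce (r-ℓ)*(b-ℓ) < ℓ*(g+ℓ+1-b)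
  have hden1 : 0 < ℓ * (g + ℓ + 1 - b) := by
    have : 1 ≤ g + ℓ + 1 - b := by omega
    exact Nat.mul_pos h1 this
  have hX : (r - ℓ) * (b - ℓ) < ℓ * (g + ℓ + 1 - b) := by
    by_contra hc
    push_neg at hc
    have h1' : aseq g r b ℓ * ((r - ℓ) * (b - ℓ))
        ≥ aseq g r b ℓ * (ℓ * (g + ℓ + 1 - b)) := Nat.mul_le_mul_left _ hc
    have h2' : aseq g r b ℓ * (ℓ * (g + ℓ + 1 - b))
        > aseq g r b (ℓ + 1) * (ℓ * (g + ℓ + 1 - b)) :=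
      Nat.mul_lt_mul_of_lt_of_le hlt (le_refl _) hden1
    omega
  have hchain : (r - (ℓ + 1)) * (b - (ℓ + 1)) < (ℓ + 1) * (g + (ℓ + 1) + 1 - b) := by
    have ha : (r - (ℓ + 1)) * (b - (ℓ + 1)) ≤ (r - ℓ) * (b - ℓ) :=
      Nat.mul_le_mul (by omega) (by omega)
    have hb' : ℓ * (g + ℓ + 1 - b) ≤ (ℓ + 1) * (g + (ℓ + 1) + 1 - b) :=
      Nat.mul_le_mul (by omega) (by omega)
    omega
  have hden2 : 0 < (ℓ + 1) * (g + (ℓ + 1) + 1 - b) := by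
    have : 1 ≤ g + (ℓ + 1) + 1 - b := by omega
    positivity
  have hfinal : aseq g r b (ℓ + 2) * ((ℓ + 1) * (g + (ℓ + 1) + 1 - b))
      < aseq g r b (ℓ + 1) * ((ℓ + 1) * (g + (ℓ + 1) + 1 - b)) := by
    have : aseq g r b (ℓ + 1) * ((r - (ℓ + 1)) * (b - (ℓ + 1)))
        < aseq g r b (ℓ + 1) * ((ℓ + 1) * (g + (ℓ + 1) + 1 - b)) :=
      Nat.mul_lt_mul_of_le_of_lt (le_refl _) hchain hpos1
    have h22 : ℓ + 1 + 1 = ℓ + 2 := rfl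
    rw [h22] at key2
    omega
  exact lt_of_mul_lt_mul_right hfinal (Nat.zero_le _)

/-- Natural-number unimodality of `aseq`. -/
lemma aseq_unimodal (g r b : ℕ) (hr : 0 < r) (hb : 0 < b) :
    ∃ L : ℕ, 1 ≤ L ∧ L ≤ min r b ∧
      (∀ k, 1 ≤ k → k + 1 ≤ L → aseq g r b k ≤ aseq g r b (k + 1)) ∧
      (∀ k, L ≤ k → k + 1 ≤ min r b → aseq g r b (k + 1) < aseq g r b k) := by
  set M := min r b with hM
  have hM1 : 1 ≤ M := le_min hr hb
  by_cases hex : ∃ ℓ, 1 ≤ ℓ ∧ ℓ + 1 ≤ M ∧ aseq g r b (ℓ + 1) < aseq g r b ℓ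
  · set L := Nat.find hex with hL
    obtain ⟨hL1, hLM, hLdec⟩ := Nat.find_spec hex
    refine ⟨L, hL1, by omega, ?_, ?_⟩
    · intro k hk1 hkL
      by_contra hc
      push_neg at hc
      exact Nat.find_min hex (show k < L by omega) ⟨hk1, by omega, hc⟩
    · intro k hLk
      induction k, hLk using Nat.le_induction with
      | base => intro _; exact hLdec
      | succ n hn ih =>
        intro hnM
        have hprev : aseq g r b (n + 1) < aseq g r b n := ih (by omega)
        exact aseq_prop g r b n (by omega) (by omega) hprev
  · push_neg at hex
    refine ⟨M, hM1, le_rfl, ?_, ?_⟩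
    · intro k hk1 hkM
      by_contra hc
      push_neg at hc
      exact absurd hc (by simpa using hex k hk1 (by omega))
    · intro k hMk hkM
      omega

/-- The probability `f(ℓ) = C(r,ℓ)·C(g,b-ℓ)·(ℓ/b)/C(r+g,b)` (that the `b`-th of `b` balls
sampled without replacement from `r` red and `g` green balls is red and exactly `ℓ` sampled
balls are red) is unimodal in `ℓ` on `1 ≤ ℓ ≤ min r b`. -/
theorem stmt2 (g r b : ℕ) (hr : 0 < r) (hb : 0 < b) (hbrg : b ≤ r + g) :
    ∃ ℓstar : ℕ, 1 ≤ ℓstar ∧ ℓstar ≤ min r b ∧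
      (∀ ℓ ℓ' : ℕ, 1 ≤ ℓ → ℓ ≤ ℓ' → ℓ' ≤ ℓstar →
        ((r.choose ℓ : ℝ) * (g.choose (b - ℓ)) * (ℓ / b)) / ((r + g).choose b)
          ≤ ((r.choose ℓ' : ℝ) * (g.choose (b - ℓ')) * (ℓ' / b)) / ((r + g).choose b)) ∧
      (∀ ℓ ℓ' : ℕ, ℓstar ≤ ℓ → ℓ ≤ ℓ' → ℓ' ≤ min r b →
        ((r.choose ℓ' : ℝ) * (g.choose (b - ℓ')) * (ℓ' / b)) / ((r + g).choose b)
          ≤ ((r.choose ℓ : ℝ) * (g.choose (b - ℓ)) * (ℓ / b)) / ((r + g).choose b)) := by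
  obtain ⟨L, hL1, hLM, hup, hdown⟩ := aseq_unimodal g r b hr hb
  have hbR : (0 : ℝ) < b := by exact_mod_cast hb
  have hcR : (0 : ℝ) < ((r + g).choose b : ℝ) := by exact_mod_cast Nat.choose_pos hbrg
  have hrep : ∀ ℓ : ℕ, ((r.choose ℓ : ℝ) * (g.choose (b - ℓ)) * (ℓ / b)) / ((r + g).choose b)
      = (aseq g r b ℓ : ℝ) / ((b : ℝ) * ((r + g).choose b)) := by
    intro ℓ
    unfold aseq
    push_cast
    field_simp
  have hmono : ∀ x y : ℕ, aseq g r b x ≤ aseq g r b y →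
      ((r.choose x : ℝ) * (g.choose (b - x)) * (x / b)) / ((r + g).choose b)
        ≤ ((r.choose y : ℝ) * (g.choose (b - y)) * (y / b)) / ((r + g).choose b) := by
    intro x y h
    rw [hrep x, hrep y]
    apply div_le_div_of_nonneg_right ?_ (by positivity)
    · exact_mod_cast h
  refine ⟨L, hL1, hLM, ?_, ?_⟩
  · intro ℓ ℓ' h1 hle
    induction ℓ', hle using Nat.le_induction with
    | base => intro _; exact le_rfl
    | succ n hn ih =>
      intro hub
      exact le_trans (ih (by omega)) (hmono n (n + 1) (hup n (by omega) (by omega)))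
  · intro ℓ ℓ' hLℓ hle
    induction ℓ', hle using Nat.le_induction with
    | base => intro _; exact le_rfl
    | succ n hn ih =>
      intro hub
      exact le_trans (hmono (n + 1) n (le_of_lt (hdown n (by omega) (by omega)))) (ih (by omega))
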